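/- For affine games G and H: if G > 0 and H ≥ 0, then G + H > 0. -/

import Mathlib

inductive AGame : Type
  | inf : AGame
  | binf : AGame
  | node : List AGame → List AGame → AGame

namespace AGame

/-- The affine games: option sets are nonempty (hereditarily). -/
inductive Valid : AGame → Prop
  | inf : Valid .inf
  | binf : Valid .binf
  | node : ∀ {L R : List AGame}, L ≠ [] → R ≠ [] →
      (∀ g ∈ L, Valid g) → (∀ g ∈ R, Valid g) → Valid (.node L R)

/-- Total version of the disjunctive sum (value on the undefined cases `∞ + ∞̄` is junk). -/
def add' : AGame → AGame → AGame
  | .inf, _ => .inf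
  | _, .inf => .inf
  | .binf, _ => .binf
  | _, .binf => .binf
  | .node L R, .node L' R' =>
      .node ((L.attach.map fun x => add' x.1 (.node L' R')) ++
             (L'.attach.map fun y => add' (.node L R) y.1))
            ((R.attach.map fun x => add' x.1 (.node L' R')) ++
             (R'.attach.map fun y => add' (.node L R) y.1))
termination_by G H => sizeOf G + sizeOf H
decreasing_by
  all_goals
    simp_wf
    first
      | (have := List.sizeOf_lt_of_mem x.2; simp_all; omega)
      | (have := List.sizeOf_lt_of_mem y.2; simp_all; omega)

/-- The disjunctive sum, undefined (`none`) exactly when adding `∞` to `∞̄`. -/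
def add : AGame → AGame → Option AGame
  | .inf, .binf => none
  | .binf, .inf => none
  | G, H => some (add' G H)

mutual
/-- `o^L(G) = L` : Left, playing first, wins `G`. -/
def lf : AGame → Bool
  | .inf => true
  | .binf => false
  | .node L _ => L.attach.any fun x => ls x.1
termination_by G => sizeOf G
decreasing_by
  simp_wf; have := List.sizeOf_lt_of_mem x.2; simp_all; omega
/-- `o^R(G) = L` : Left, playing second, wins `G`. -/
def ls : AGame → Bool
  | .inf => true
  | .binf => false
  | .node _ R => R.attach.all fun x => lf x.1
termination_by G => sizeOf G
decreasing_by
  simp_wf; have := List.sizeOf_lt_of_mem x.2; simp_all; omega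
end

/-- The combined outcome `(o^L(G), o^R(G))`, encoded as a pair of booleans
(`true` = Left wins). `(true,true)` is 𝓛, `(true,false)` is 𝓝, `(false,true)` is 𝓟,
`(false,false)` is 𝓡. -/
def outcome (G : AGame) : Bool × Bool := (lf G, ls G)

/-- The partial order of outcomes (componentwise, 𝓛 maximal, 𝓡 minimal, 𝓝 ∥ 𝓟). -/
def OutLE (a b : Bool × Bool) : Prop :=
  (a.1 = true → b.1 = true) ∧ (a.2 = true → b.2 = true)

/-- `G ≥ H` : replacing `H` by `G` never hurts Left in any disjunctive sum. -/
def GE (G H : AGame) : Prop :=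
  ∀ X : AGame, Valid X → X ≠ .inf → X ≠ .binf →
    OutLE (outcome (add' H X)) (outcome (add' G X))

/-- Game equivalence. -/
def Equiv (G H : AGame) : Prop :=
  ∀ X : AGame, Valid X → X ≠ .inf → X ≠ .binf →
    outcome (add' G X) = outcome (add' H X)

/-- The zero game `{∞̄ | ∞}`. -/
def zero : AGame := .node [.binf] [.inf]

/-- The conjugate (players switch roles). -/
def neg : AGame → AGame
  | .inf => .binf
  | .binf => .inf
  | .node L R =>
      .node (R.attach.map fun x => neg x.1) (L.attach.map fun x => neg x.1)
termination_by G => sizeOf G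
decreasing_by
  all_goals
    simp_wf
    (have := List.sizeOf_lt_of_mem x.2; simp_all; omega)


/-- Left option set (empty list for the terminating games). -/
def leftOptions : AGame → List AGame
  | .node L _ => L
  | _ => []

/-- Right option set (empty list for the terminating games). -/
def rightOptions : AGame → List AGame
  | .node _ R => R
  | _ => []

/-- A check: a game having `∞` as a Left option or `∞̄` as a Right option. -/
def IsCheck : AGame → Prop
  | .node L R => .inf ∈ L ∨ .binf ∈ R
  | _ => False

/-- `Follower H G` : `H` is a follower of `G` (i.e. `G` itself, an option of `G`,
an option of an option, and so on). -/
inductive Follower : AGame → AGame → Prop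
  | refl (G : AGame) : Follower G G
  | left {H K : AGame} {L R : List AGame} : K ∈ L → Follower H K → Follower H (.node L R)
  | right {H K : AGame} {L R : List AGame} : K ∈ R → Follower H K → Follower H (.node L R)

/-- A Conway form: distinct from `∞` and `∞̄`, with no checks among its followers. -/
def ConwayForm (G : AGame) : Prop :=
  G ≠ .inf ∧ G ≠ .binf ∧ ∀ H, Follower H G → ¬ IsCheck H

/-- A Conway game: a game equivalent to some Conway form. -/
def ConwayGame (G : AGame) : Prop :=
  ∃ G', Valid G' ∧ ConwayForm G' ∧ Equiv G G'

/-- `J` is invertible: `J + K = 0` (in the sense of game equivalence) for some affine `K`. -/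
def Invertible (J : AGame) : Prop :=
  ∃ K, Valid K ∧ ∃ S, add J K = some S ∧ Equiv S zero

/-- Number forms: the images of the surreal-number Conway forms under the embedding
that replaces an empty option set by `{∞̄}` on the Left and by `{∞}` on the Right.
Every genuine Left option is strictly less than every genuine Right option, and
all genuine options are again number forms. -/
inductive NumForm : AGame → Prop
  | mk {L R : List AGame}
      (hL0 : L ≠ []) (hR0 : R ≠ [])
      (hLb : .binf ∈ L → L = [.binf]) (hRi : .inf ∈ R → R = [.inf])
      (hLnum : ∀ x ∈ L, x ≠ .binf → NumForm x)
      (hRnum : ∀ y ∈ R, y ≠ .inf → NumForm y)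
      (hlt : ∀ x ∈ L, ∀ y ∈ R, x ≠ .binf → y ≠ .inf → GE y x ∧ ¬ GE x y) :
      NumForm (.node L R)

/-- A number: an affine game equal to (the image of) a Conway number form. -/
def IsNumber (G : AGame) : Prop := ∃ n, Valid n ∧ NumForm n ∧ Equiv G n

/-- The pathetic tiny `⧾∞ = {0 | {0 | ∞̄}}`. -/
def tinyInf : AGame := .node [zero] [.node [zero] [.binf]]

/-- The pathetic miny `⧿∞ = {{∞ | 0} | 0}`. -/
def minyInf : AGame := .node [.node [.inf] [zero]] [zero]

end AGame

/-!
Unfolding the definition, `G ≥ 0` says `o(X) ≤ o(G + X)` for every non-infinite affine `X`,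
and this extends to `X = ∞, ∞̄`, which are the top and bottom outcomes. Applying it to `H` and
then to `G` gives `o(X) ≤ o(H + X) ≤ o(G + (H + X)) = o((G + H) + X)`. If moreover `G + H = 0`,
then `o(G + X) ≤ o(H + (G + X)) = o((G + H) + X) = o(X) ≤ o(G + X)`, so `G = 0`.
Besides associativity of the sum, this only uses that outcomes are invariant under
`A + (B + C) ↦ B + (A + C)`; both follow by induction on the sum of the game sizes.
-/

theorem List.any_congr_of_mem {α : Type*} {l : List α} {p q : α → Bool}
    (h : ∀ a ∈ l, p a = q a) : l.any p = l.any q := by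
  induction l <;> simp_all

theorem List.all_congr_of_mem {α : Type*} {l : List α} {p q : α → Bool}
    (h : ∀ a ∈ l, p a = q a) : l.all p = l.all q := by
  induction l <;> simp_all

namespace AGame

theorem outLE_iff_le {a b : Bool × Bool} : OutLE a b ↔ a ≤ b := by
  simp only [OutLE, Prod.le_def, Bool.le_iff_imp]

@[simp] theorem lf_inf : lf .inf = true := by rw [lf]
@[simp] theorem lf_binf : lf .binf = false := by rw [lf]
@[simp] theorem ls_inf : ls .inf = true := by rw [ls]
@[simp] theorem ls_binf : ls .binf = false := by rw [ls]
@[simp] theorem lf_node (L R : List AGame) : lf (.node L R) = L.any ls := by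
  rw [lf]; simp [List.any_eq]
@[simp] theorem ls_node (L R : List AGame) : ls (.node L R) = R.all lf := by
  rw [ls]; simp [List.all_eq]

@[simp] theorem outcome_inf : outcome .inf = ⊤ := by simp [outcome]; rfl
@[simp] theorem outcome_binf : outcome .binf = ⊥ := by simp [outcome]; rfl

@[simp] theorem inf_add' (X : AGame) : add' .inf X = .inf := by rw [add']
@[simp] theorem add'_inf (X : AGame) : add' X .inf = .inf := by cases X <;> simp [add']
@[simp] theorem binf_add'_binf : add' .binf .binf = .binf := by simp [add']
@[simp] theorem binf_add'_node (L R : List AGame) : add' .binf (.node L R) = .binf := by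
  simp [add']
@[simp] theorem node_add'_binf (L R : List AGame) : add' (.node L R) .binf = .binf := by
  simp [add']

theorem node_add'_node (L R L' R' : List AGame) :
    add' (.node L R) (.node L' R') =
      .node ((L.map fun x => add' x (.node L' R')) ++ (L'.map fun y => add' (.node L R) y))
            ((R.map fun x => add' x (.node L' R')) ++ (R'.map fun y => add' (.node L R) y)) := by
  rw [add']; simp

theorem sizeOf_lt_of_mem_left {a : AGame} {L R : List AGame} (h : a ∈ L) :
    sizeOf a < sizeOf (node L R) := by
  have := List.sizeOf_lt_of_mem h
  simp only [node.sizeOf_spec]; omega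

theorem sizeOf_lt_of_mem_right {a : AGame} {L R : List AGame} (h : a ∈ R) :
    sizeOf a < sizeOf (node L R) := by
  have := List.sizeOf_lt_of_mem h
  simp only [node.sizeOf_spec]; omega

theorem add'_assoc (A B C : AGame) : add' (add' A B) C = add' A (add' B C) := by
  rcases A with _ | _ | ⟨La, Ra⟩ <;> rcases B with _ | _ | ⟨Lb, Rb⟩ <;>
    rcases C with _ | _ | ⟨Lc, Rc⟩
  case node.node.node =>
    rw [node_add'_node La Ra Lb Rb, node_add'_node _ _ Lc Rc, node_add'_node Lb Rb Lc Rc,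
      node_add'_node La Ra]
    simp only [List.map_append, List.map_map, List.append_assoc, ← node_add'_node]
    congr 1 <;> refine congrArg₂ (· ++ ·) ?_ (congrArg₂ (· ++ ·) ?_ ?_) <;>
      exact List.map_congr_left fun x _ => add'_assoc _ _ _
  all_goals simp [node_add'_node]
termination_by sizeOf A + sizeOf B + sizeOf C
decreasing_by
  all_goals
    gcongr
    first | exact sizeOf_lt_of_mem_left ‹_› | exact sizeOf_lt_of_mem_right ‹_›

theorem outcome_add'_left_comm (A B C : AGame) :
    outcome (add' A (add' B C)) = outcome (add' B (add' A C)) := by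
  rcases A with _ | _ | ⟨La, Ra⟩ <;> rcases B with _ | _ | ⟨Lb, Rb⟩ <;>
    rcases C with _ | _ | ⟨Lc, Rc⟩
  case node.node.node =>
    rw [node_add'_node Lb Rb Lc Rc, node_add'_node La Ra, node_add'_node La Ra Lc Rc,
      node_add'_node Lb Rb]
    simp only [outcome, Prod.mk.injEq, lf_node, ls_node, List.any_append, List.all_append,
      List.any_map, List.all_map, Function.comp_def, ← node_add'_node]
    rw [Bool.or_left_comm, Bool.and_left_comm]
    refine ⟨congrArg₂ (· || ·) ?_ (congrArg₂ (· || ·) ?_ ?_),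
      congrArg₂ (· && ·) ?_ (congrArg₂ (· && ·) ?_ ?_)⟩
    all_goals first
      | exact List.any_congr_of_mem fun x _ => congrArg Prod.snd (outcome_add'_left_comm _ _ _)
      | exact List.all_congr_of_mem fun x _ => congrArg Prod.fst (outcome_add'_left_comm _ _ _)
  all_goals simp [outcome, node_add'_node]
termination_by sizeOf A + sizeOf B + sizeOf C
decreasing_by
  all_goals
    gcongr
    first | exact sizeOf_lt_of_mem_left ‹_› | exact sizeOf_lt_of_mem_right ‹_›

theorem outcome_zero_add' (X : AGame) : outcome (add' zero X) = outcome X := by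
  rcases X with _ | _ | ⟨L, R⟩
  case node =>
    simp only [zero, node_add'_node, outcome, lf_node, ls_node, List.map_cons, List.map_nil,
      List.cons_append, List.nil_append, List.any_cons, List.all_cons, binf_add'_node, inf_add',
      ls_binf, lf_inf, Bool.false_or, Bool.true_and, List.any_map, List.all_map,
      Function.comp_def]
    exact congrArg₂ Prod.mk
      (List.any_congr_of_mem fun y _ => congrArg Prod.snd (outcome_zero_add' y))
      (List.all_congr_of_mem fun y _ => congrArg Prod.fst (outcome_zero_add' y))
  all_goals simp [zero, outcome]
termination_by sizeOf X
decreasing_by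
  all_goals first | exact sizeOf_lt_of_mem_left ‹_› | exact sizeOf_lt_of_mem_right ‹_›

theorem valid_node_iff {L R : List AGame} :
    Valid (node L R) ↔ L ≠ [] ∧ R ≠ [] ∧ (∀ g ∈ L, Valid g) ∧ ∀ g ∈ R, Valid g :=
  ⟨fun h => by cases h; exact ⟨‹_›, ‹_›, ‹_›, ‹_›⟩, fun ⟨hL, hR, hLv, hRv⟩ => .node hL hR hLv hRv⟩

theorem valid_add' : ∀ {A B : AGame}, Valid A → Valid B → Valid (add' A B)
  | .inf, _, _, _ | _, .inf, _, _ => by simpa using Valid.inf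
  | .binf, .binf, _, _ | .binf, .node _ _, _, _ | .node _ _, .binf, _, _ => by
    simpa using Valid.binf
  | .node La Ra, .node Lb Rb, hA, hB => by
    obtain ⟨hLa, hRa, hLav, hRav⟩ := valid_node_iff.1 hA
    obtain ⟨-, -, hLbv, hRbv⟩ := valid_node_iff.1 hB
    rw [node_add'_node]
    refine .node (by simp [hLa]) (by simp [hRa]) ?_ ?_ <;>
      simp only [List.mem_append, List.mem_map] <;> rintro _ (⟨a, ha, rfl⟩ | ⟨b, hb, rfl⟩)
    · exact valid_add' (hLav a ha) hB
    · exact valid_add' hA (hLbv b hb)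
    · exact valid_add' (hRav a ha) hB
    · exact valid_add' hA (hRbv b hb)
termination_by A B => sizeOf A + sizeOf B
decreasing_by
  all_goals
    gcongr
    first | exact sizeOf_lt_of_mem_left ‹_› | exact sizeOf_lt_of_mem_right ‹_›

theorem GE.outcome_le_outcome_add' {G Y : AGame} (hG : GE G zero) (hY : Valid Y) :
    outcome Y ≤ outcome (add' G Y) := by
  rcases Y with _ | _ | ⟨L, R⟩
  case node => simpa [outLE_iff_le, outcome_zero_add'] using hG _ hY (by simp) (by simp)
  all_goals simp

/-- If `G > 0` and `H ≥ 0` then `G + H > 0`. -/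
theorem add_pos (G H : AGame) (hG : Valid G) (hH : Valid H)
    (hG0 : GE G zero) (hG0' : ¬ Equiv G zero) (hH0 : GE H zero) :
    GE (add' G H) zero ∧ ¬ Equiv (add' G H) zero := by
  refine ⟨fun X hX _ _ => ?_, fun hGH => hG0' fun X hX hXi hXb => ?_⟩
  · rw [outLE_iff_le, outcome_zero_add', add'_assoc]
    exact (hH0.outcome_le_outcome_add' hX).trans (hG0.outcome_le_outcome_add' (valid_add' hH hX))
  · rw [outcome_zero_add']
    refine le_antisymm ?_ (hG0.outcome_le_outcome_add' hX)
    calc outcome (add' G X)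
        ≤ outcome (add' H (add' G X)) := hH0.outcome_le_outcome_add' (valid_add' hG hX)
      _ = outcome (add' (add' G H) X) := by rw [outcome_add'_left_comm, add'_assoc]
      _ = outcome X := by rw [hGH X hX hXi hXb, outcome_zero_add']
end AGame
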